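/- The Dubrovin bracket on ℝ³ defined by {x,y} = xy − 2z, {y,z} = yz − 2x, {z,x} = zx − 2y satisfies the Jacobi identity, i.e., the bivector π = (xy−2z)∂x∧∂y + (yz−2x)∂y∧∂z + (zx−2y)∂z∧∂x is a Poisson tensor. -/

import Mathlib

/-! The bracket of two coordinate functions is the corresponding quadratic coefficient of `π`;
bracketing a coordinate with it only involves its (linear) partial derivatives, so the cyclic
sum becomes a polynomial identity in `x, y, z` that cancels. -/

/-- Partial derivative in the `i`-th coordinate direction on `ℝ³`. -/
noncomputable def pd (i : Fin 3) (f : (Fin 3 → ℝ) → ℝ) (p : Fin 3 → ℝ) : ℝ :=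
  fderiv ℝ f p (Pi.single i 1)

/-- The Dubrovin bracket on functions on `ℝ³`, given by the bivector
`π = (xy−2z)∂x∧∂y + (yz−2x)∂y∧∂z + (zx−2y)∂z∧∂x`. -/
noncomputable def dubrovinBracket (f g : (Fin 3 → ℝ) → ℝ) (p : Fin 3 → ℝ) : ℝ :=
  (p 0 * p 1 - 2 * p 2) * (pd 0 f p * pd 1 g p - pd 1 f p * pd 0 g p)
  + (p 1 * p 2 - 2 * p 0) * (pd 1 f p * pd 2 g p - pd 2 f p * pd 1 g p)
  + (p 2 * p 0 - 2 * p 1) * (pd 2 f p * pd 0 g p - pd 0 f p * pd 2 g p)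

lemma HasFDerivAt.pd_eq {f : (Fin 3 → ℝ) → ℝ} {f' : (Fin 3 → ℝ) →L[ℝ] ℝ} {p : Fin 3 → ℝ}
    (h : HasFDerivAt f f' p) (i : Fin 3) : pd i f p = f' (Pi.single i 1) := by
  rw [pd, h.fderiv]

lemma pd_coord (i j : Fin 3) (p : Fin 3 → ℝ) :
    pd i (fun q => q j) p = if j = i then 1 else 0 := by
  simp [(hasFDerivAt_apply (𝕜 := ℝ) j p).pd_eq, Pi.single_apply]

lemma pd_mul_sub_two_mul (a b c i : Fin 3) (p : Fin 3 → ℝ) :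
    pd i (fun q => q a * q b - 2 * q c) p =
      pd i (fun q => q a) p * p b + p a * pd i (fun q => q b) p - 2 * pd i (fun q => q c) p := by
  have h : HasFDerivAt (fun q : Fin 3 → ℝ => q a * q b - 2 * q c) _ p :=
    ((hasFDerivAt_apply (𝕜 := ℝ) a p).mul (hasFDerivAt_apply b p)).sub
      ((hasFDerivAt_apply c p).const_mul 2)
  rw [h.pd_eq, pd_coord, pd_coord, pd_coord]
  simp [Pi.single_apply]
  ring

lemma dubrovinBracket_y_z :
    dubrovinBracket (fun q => q 1) (fun q => q 2) = fun q => q 1 * q 2 - 2 * q 0 := by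
  funext q
  simp [dubrovinBracket, pd_coord]

lemma dubrovinBracket_z_x :
    dubrovinBracket (fun q => q 2) (fun q => q 0) = fun q => q 2 * q 0 - 2 * q 1 := by
  funext q
  simp [dubrovinBracket, pd_coord]

lemma dubrovinBracket_x_y :
    dubrovinBracket (fun q => q 0) (fun q => q 1) = fun q => q 0 * q 1 - 2 * q 2 := by
  funext q
  simp [dubrovinBracket, pd_coord]

/-- The Dubrovin bracket satisfies the Jacobi identity on the coordinate
functions `x, y, z`, hence the bivector is a Poisson tensor. -/
theorem dubrovin_jacobi :
    ∀ p : Fin 3 → ℝ,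
      dubrovinBracket (fun q => q 0)
          (dubrovinBracket (fun q => q 1) (fun q => q 2)) p
      + dubrovinBracket (fun q => q 1)
          (dubrovinBracket (fun q => q 2) (fun q => q 0)) p
      + dubrovinBracket (fun q => q 2)
          (dubrovinBracket (fun q => q 0) (fun q => q 1)) p = 0 := by
  intro p
  rw [dubrovinBracket_y_z, dubrovinBracket_z_x, dubrovinBracket_x_y]
  simp only [dubrovinBracket, pd_mul_sub_two_mul, pd_coord, Fin.reduceEq, ↓reduceIte]
  ring
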